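/- arXiv:1905.09139 — 2 statements merged into one kernel-verified Lean document; each statement's English description precedes it below -/
import Mathlib

section
/- Let F be a formal power series (or polynomial) with F(0) > 0, and let f be the formal power series satisfying x = f(x)/F(f(x)) with f(0)=0. Then for integers 1 ≤ k ≤ i, the coefficient of x^i in f(x)^k equals (k/i) times the coefficient of x^{i-k} in F(x)^i. -/
open Finset

private lemma lag_polyid (F : Polynomial ℝ) (k m : ℕ) (hk : 1 ≤ k) :
    Polynomial.C ((k + m : ℕ) : ℝ) * (Polynomial.derivative (F ^ k) * F ^ m) =
      Polynomial.C (k : ℝ) * Polynomial.derivative (F ^ (k + m)) := by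
  rw [Polynomial.derivative_pow, Polynomial.derivative_pow]
  have h : F ^ (k - 1) * F ^ m = F ^ (k + m - 1) := by
    rw [← pow_add]; congr 1; omega
  rw [← h]; ring

/-- Lagrange–Bürmann inversion: if `F` is a polynomial with `F(0) > 0` and
`f` is the formal power series with `f(0) = 0` satisfying `x = f(x)/F(f(x))`
(equivalently `f = X · F(f)`), then for `1 ≤ k ≤ i` the coefficient of `x^i` in `f^k`
equals `(k/i)` times the coefficient of `x^{i-k}` in `F^i`. -/
theorem lagrange_inversion
    (F : Polynomial ℝ) (hF : 0 < F.coeff 0)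
    (f : PowerSeries ℝ) (hf0 : PowerSeries.coeff 0 f = 0)
    (hrel : f = PowerSeries.X * Polynomial.aeval f F)
    (k i : ℕ) (hk : 1 ≤ k) (hki : k ≤ i) :
    PowerSeries.coeff i (f ^ k) = ((k : ℝ) / (i : ℝ)) * (F ^ i).coeff (i - k) := by
  -- vanishing of low coefficients of powers of f
  have hvan : ∀ j mm : ℕ, mm < j → PowerSeries.coeff mm (f ^ j) = 0 := by
    intro j mm h
    have hfj : f ^ j = PowerSeries.X ^ j * (Polynomial.aeval f F) ^ j := by
      nth_rewrite 1 [hrel]; rw [mul_pow]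
    rw [hfj, PowerSeries.coeff_X_pow_mul', if_neg (by omega)]
  -- expansion of coefficients of aeval
  have hexp : ∀ (G : Polynomial ℝ) (mm : ℕ),
      PowerSeries.coeff mm (Polynomial.aeval f G) =
        ∑ j ∈ range (mm + 1), G.coeff j * PowerSeries.coeff mm (f ^ j) := by
    intro G mm
    have hN : G.natDegree < max (G.natDegree + 1) (mm + 1) :=
      lt_of_lt_of_le (Nat.lt_succ_self _) (le_max_left _ _)
    rw [Polynomial.aeval_eq_sum_range' hN, map_sum]
    rw [← Finset.sum_subset (Finset.range_subset_range.mpr (le_max_right _ _))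
      (fun j _ hj' => ?_)]
    · exact Finset.sum_congr rfl fun j _ => by rw [map_smul, smul_eq_mul]
    · rw [map_smul, hvan j mm (by simp only [Finset.mem_range, not_lt] at hj'; omega),
        smul_zero]
  have main : ∀ i : ℕ, ∀ k : ℕ, 1 ≤ k → k ≤ i →
      PowerSeries.coeff i (f ^ k) = ((k : ℝ) / (i : ℝ)) * (F ^ i).coeff (i - k) := by
    intro i
    induction i using Nat.strong_induction_on with
    | _ i IH =>
      intro k hk hki
      obtain ⟨m, rfl⟩ : ∃ m, i = k + m := ⟨i - k, by omega⟩
      rw [Nat.add_sub_cancel_left]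
      have stepA : PowerSeries.coeff (k + m) (f ^ k) =
          PowerSeries.coeff m (Polynomial.aeval f (F ^ k)) := by
        nth_rewrite 1 [hrel]
        rw [mul_pow, ← map_pow, show k + m = m + k from add_comm _ _,
          PowerSeries.coeff_X_pow_mul]
      rcases Nat.eq_zero_or_pos m with rfl | hm
      · have hk0 : (k : ℝ) ≠ 0 := Nat.cast_ne_zero.mpr (by omega)
        rw [stepA, hexp]
        simp [Finset.sum_range_one, div_self hk0]
      · have hm0 : (m : ℝ) ≠ 0 := Nat.cast_ne_zero.mpr (by omega)
        have hkm0 : ((k : ℝ) + m) ≠ 0 := by positivity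
        have hmi : m < k + m := by omega
        rw [stepA, hexp]
        have S1 : ∑ j ∈ range (m + 1), (F ^ k).coeff j * PowerSeries.coeff m (f ^ j)
            = ∑ j ∈ range (m + 1),
                (F ^ k).coeff j * ((j : ℝ) / (m : ℝ) * (F ^ m).coeff (m - j)) := by
          refine Finset.sum_congr rfl fun j hj => ?_
          rcases Nat.eq_zero_or_pos j with rfl | hjpos
          · simp only [pow_zero, PowerSeries.coeff_one, if_neg (by omega : ¬ m = 0),
              Nat.cast_zero, zero_div, zero_mul, mul_zero]
          · congr 1
            exact IH m hmi j hjpos (Nat.lt_succ_iff.mp (Finset.mem_range.mp hj))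
        have S3 : ∑ j ∈ range (m + 1),
              (j : ℝ) * ((F ^ k).coeff j * (F ^ m).coeff (m - j))
            = (Polynomial.derivative (F ^ k) * F ^ m).coeff (m - 1) := by
          rw [Polynomial.coeff_mul, Finset.Nat.sum_antidiagonal_eq_sum_range_succ_mk,
            show (m - 1).succ = m from by omega, Finset.sum_range_succ']
          simp only [Nat.cast_zero, zero_mul, add_zero]
          refine Finset.sum_congr rfl fun j _ => ?_
          rw [Polynomial.coeff_derivative, show m - (j + 1) = m - 1 - j from by omega]
          push_cast; ring
        have hpid := congrArg (fun p => Polynomial.coeff p (m - 1)) (lag_polyid F k m hk)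
        simp only [Polynomial.coeff_C_mul] at hpid
        rw [Polynomial.coeff_derivative, show m - 1 + 1 = m from by omega] at hpid
        have hc : ((m - 1 : ℕ) : ℝ) + 1 = (m : ℝ) := by
          exact_mod_cast congrArg (Nat.cast (R := ℝ)) (show m - 1 + 1 = m by omega)
        rw [hc] at hpid
        rw [S1]
        have S2 : ∑ j ∈ range (m + 1),
              (F ^ k).coeff j * ((j : ℝ) / (m : ℝ) * (F ^ m).coeff (m - j))
            = (1 / (m : ℝ)) * ∑ j ∈ range (m + 1),
                (j : ℝ) * ((F ^ k).coeff j * (F ^ m).coeff (m - j)) := by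
          rw [Finset.mul_sum]
          exact Finset.sum_congr rfl fun j _ => by ring
        rw [S2, S3]
        push_cast at hpid ⊢
        field_simp
        linear_combination hpid
  exact main i k hk hki
end

section
/- For the random walk on ℤ with i.i.d. steps in {-1,0,1,2} started at k ≥ 1, the hitting time τ_k of 0 satisfies P(τ_k = i) = (k/i)·[u^{i-k}] F(u)^i for all i ≥ k, where F(u) = p_{-1} + p_0·u + p_1·u^2 + p_2·u^3, and P(τ_k = i) = 0 for i < k. -/
open MeasureTheory ProbabilityTheory

noncomputable section

variable {Ω : Type*}

/-- Position at time `t` of the walk started at `k` with increments `step`. -/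
def walk (k : ℤ) (step : ℕ → Ω → ℤ) (t : ℕ) (ω : Ω) : ℤ :=
  k + ∑ s ∈ Finset.range t, step s ω

/-- First hitting time of `0` (with value `⊤` if the walk never hits `0`). -/
def hitTime (k : ℤ) (step : ℕ → Ω → ℤ) (ω : Ω) : ℕ∞ :=
  ⨅ (t : ℕ) (_ : walk k step t ω = 0), (t : ℕ∞)

/-- Probability generating function `E[x^τ]` of the hitting time (with `x^∞ := 0`). -/
def pgf [MeasurableSpace Ω] (μ : Measure Ω) (k : ℤ) (step : ℕ → Ω → ℤ) (x : ℝ) : ℝ :=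
  ∑' i : ℕ, (μ {ω | hitTime k step ω = (i : ℕ∞)}).toReal * x ^ i

namespace HitAux
open scoped Classical


/-- Discrete IVT for down-skip-free walks. -/
lemma exists_hit (T : ℕ → ℤ) (h0 : T 0 = 0) (hstep : ∀ t, T t - 1 ≤ T (t + 1)) :
    ∀ a v, T a ≤ v → v ≤ 0 → ∃ t ≤ a, T t = v := by
  intro a
  induction a with
  | zero => intro v h1 h2; exact ⟨0, le_refl _, by omega⟩
  | succ n ih =>
    intro v h1 h2
    by_cases h : T n ≤ v
    · obtain ⟨t, ht, he⟩ := ih v h h2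
      exact ⟨t, by omega, he⟩
    · exact ⟨n + 1, le_refl _, by have := hstep n; omega⟩

/-- The cycle lemma: exactly `k` of the `i` cyclic rotations are first-passage paths. -/
lemma cycle_core (i k : ℕ) (hk : 1 ≤ k) (hki : k ≤ i) (T : ℕ → ℤ)
    (h0 : T 0 = 0) (hstep : ∀ t, T t - 1 ≤ T (t + 1)) (hper : ∀ t, T (t + i) = T t - k) :
    ((Finset.range i).filter (fun j => ∀ t, 0 < t → t < i → T j - k < T (j + t))).card = k := by
  classical
  have hi : 0 < i := by omega
  obtain ⟨j0, hj0mem, hj0min⟩ :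
      ∃ j0 ∈ Finset.range i, ∀ t ∈ Finset.range i, T j0 ≤ T t :=
    Finset.exists_min_image _ T ⟨0, Finset.mem_range.2 hi⟩
  set m := T j0 with hm
  have hj0i : j0 < i := Finset.mem_range.1 hj0mem
  have hmin : ∀ t, t < i → m ≤ T t := fun t ht => hj0min t (Finset.mem_range.2 ht)
  -- m ≤ 1 - k
  have hTi : T i = -(k : ℤ) := by have := hper 0; simpa [h0] using this
  have hmk : m + (k : ℤ) ≤ 1 := by
    have h1 : T (i - 1) - 1 ≤ T i := by
      have := hstep (i - 1); rwa [Nat.sub_add_cancel hi] at this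
    have h2 : m ≤ T (i - 1) := hmin _ (by omega)
    omega
  -- claim 1 : good j implies earlier values are strictly bigger
  have claim1 : ∀ j, j < i → (∀ t, 0 < t → t < i → T j - k < T (j + t)) →
      ∀ s, s < j → T j < T s := by
    intro j hj hgood s hs
    have h1 : T j - k < T (j + (s + i - j)) := hgood (s + i - j) (by omega) (by omega)
    have h2 : j + (s + i - j) = s + i := by omega
    rw [h2, hper s] at h1
    omega
  -- the least hitting time of each value v with m ≤ v ≤ 0
  have key : ∀ v : ℤ, m ≤ v → v ≤ 0 →
      ∃ t, t < i ∧ T t = v ∧ ∀ s, s < t → T s ≠ v := by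
    intro v h1 h2
    obtain ⟨t, hti, hte⟩ := exists_hit T h0 hstep j0 v h1 h2
    have hex : ∃ t, T t = v := ⟨t, hte⟩
    refine ⟨Nat.find hex, ?_, Nat.find_spec hex, fun s hs => Nat.find_min hex hs⟩
    exact lt_of_le_of_lt (Nat.find_min' hex hte) (by omega)
  have hcard : ((Finset.range i).filter
      (fun j => ∀ t, 0 < t → t < i → T j - (k:ℤ) < T (j + t))).card = (Finset.range k).card := by
    apply Finset.card_bij (fun j _ => (T j - m).toNat)
    · -- maps to range k
      intro j hj
      simp only [Finset.mem_filter, Finset.mem_range] at hj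
      obtain ⟨hji, hgood⟩ := hj
      have hge : m ≤ T j := hmin j hji
      have hle : T j ≤ m + k - 1 := by
        rcases lt_trichotomy j0 j with h | h | h
        · have := claim1 j hji hgood j0 h; omega
        · subst h; omega
        · have h1 : T j - k < T (j + (j0 - j)) := hgood (j0 - j) (by omega) (by omega)
          have h2 : j + (j0 - j) = j0 := by omega
          rw [h2] at h1; omega
      simp only [Finset.mem_range]
      omega
    · -- injective
      intro j1 h1 j2 h2 heq
      simp only [Finset.mem_filter, Finset.mem_range] at h1 h2
      have hv1 : m ≤ T j1 := hmin j1 h1.1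
      have hv2 : m ≤ T j2 := hmin j2 h2.1
      have hTeq : T j1 = T j2 := by omega
      by_contra hne
      rcases lt_or_gt_of_ne hne with h | h
      · have := claim1 j2 h2.1 h2.2 j1 h; omega
      · have := claim1 j1 h1.1 h1.2 j2 h; omega
    · -- surjective
      intro d hd
      simp only [Finset.mem_range] at hd
      obtain ⟨j, hji, hTj, hleast⟩ := key (m + d) (by omega) (by omega)
      refine ⟨j, ?_, by omega⟩
      simp only [Finset.mem_filter, Finset.mem_range]
      refine ⟨hji, fun t ht hti => ?_⟩
      by_cases hcase : j + t < i
      · have := hmin (j + t) hcase; omega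
      · have hs : j + t - i < j := by omega
        have h2 : T (j + t) = T (j + t - i) - k := by
          have := hper (j + t - i)
          have h3 : j + t - i + i = j + t := by omega
          rwa [h3] at this
        have h4 : T (j + t - i) ≠ m + d := hleast _ hs
        have h5 : ¬ T (j + t - i) < m + d := by
          intro hlt
          obtain ⟨s, hsle, hse⟩ := exists_hit T h0 hstep (j + t - i) (m + d) (by omega) (by omega)
          exact hleast s (by omega) hse
        omega

  rw [hcard, Finset.card_range]


def cext {i : ℕ} (hi : 0 < i) (c : Fin i → Fin 4) (t : ℕ) : Fin 4 :=
  c ⟨t % i, Nat.mod_lt t hi⟩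

lemma cext_lt {i : ℕ} (hi : 0 < i) (c : Fin i → Fin 4) (t : ℕ) (ht : t < i) :
    cext hi c t = c ⟨t, ht⟩ := by
  simp only [cext]
  congr 1
  exact Fin.ext (Nat.mod_eq_of_lt ht)

lemma cext_add_i {i : ℕ} (hi : 0 < i) (c : Fin i → Fin 4) (t : ℕ) :
    cext hi c (t + i) = cext hi c t := by
  simp only [cext]
  congr 1
  exact Fin.ext (Nat.add_mod_right t i)

def TT {i : ℕ} (hi : 0 < i) (c : Fin i → Fin 4) (t : ℕ) : ℤ :=
  ∑ s ∈ Finset.range t, ((cext hi c s : ℤ) - 1)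

def rot {i : ℕ} (hi : 0 < i) (j : ℕ) (c : Fin i → Fin 4) : Fin i → Fin 4 :=
  fun t => cext hi c ((t : ℕ) + j)

def Good {i : ℕ} (hi : 0 < i) (k : ℕ) (c : Fin i → Fin 4) : Prop :=
  ∀ t : ℕ, 0 < t → t < i → -(k : ℤ) < TT hi c t

lemma cext_rot {i : ℕ} (hi : 0 < i) (j : ℕ) (c : Fin i → Fin 4) (s : ℕ) :
    cext hi (rot hi j c) s = cext hi c (s + j) := by
  simp only [cext, rot]
  congr 1
  exact Fin.ext (by simp [Nat.mod_add_mod])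

lemma TT_zero {i : ℕ} (hi : 0 < i) (c : Fin i → Fin 4) : TT hi c 0 = 0 := by
  simp [TT]

lemma TT_succ {i : ℕ} (hi : 0 < i) (c : Fin i → Fin 4) (t : ℕ) :
    TT hi c (t + 1) = TT hi c t + ((cext hi c t : ℤ) - 1) := by
  simp [TT, Finset.sum_range_succ]
  ring

lemma TT_step {i : ℕ} (hi : 0 < i) (c : Fin i → Fin 4) (t : ℕ) :
    TT hi c t - 1 ≤ TT hi c (t + 1) := by
  rw [TT_succ]
  have : (0 : ℤ) ≤ (cext hi c t : ℤ) := Int.natCast_nonneg _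
  omega

lemma TT_add {i : ℕ} (hi : 0 < i) (c : Fin i → Fin 4) (j t : ℕ) :
    TT hi c (j + t) = TT hi c j + ∑ s ∈ Finset.range t, ((cext hi c (j + s) : ℤ) - 1) := by
  simp [TT, Finset.sum_range_add]
  ring

lemma TT_rot {i : ℕ} (hi : 0 < i) (j : ℕ) (c : Fin i → Fin 4) (t : ℕ) :
    TT hi (rot hi j c) t = TT hi c (j + t) - TT hi c j := by
  rw [TT_add]
  simp only [TT, cext_rot]
  rw [add_sub_cancel_left]
  exact Finset.sum_congr rfl fun s _ => by rw [Nat.add_comm s j]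

lemma TT_window {i : ℕ} (hi : 0 < i) (c : Fin i → Fin 4) :
    ∀ j, TT hi c (j + i) = TT hi c j + TT hi c i := by
  intro j
  induction j with
  | zero => simp [TT_zero]
  | succ j ih =>
    have h1 : j + 1 + i = (j + i) + 1 := by omega
    rw [h1, TT_succ, ih, TT_succ, cext_add_i]
    ring

lemma rot_rot {i : ℕ} (hi : 0 < i) (j j' : ℕ) (c : Fin i → Fin 4) :
    rot hi j' (rot hi j c) = rot hi (j + j') c := by
  funext t
  simp only [rot]
  rw [cext_rot]
  congr 1
  omega

lemma rot_i {i : ℕ} (hi : 0 < i) (c : Fin i → Fin 4) : rot hi i c = c := by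
  funext t
  simp only [rot, cext]
  congr 1
  exact Fin.ext (by simp [Nat.add_mod_right, Nat.mod_eq_of_lt t.isLt])

lemma rot_bijective {i : ℕ} (hi : 0 < i) (j : ℕ) (hj : j ≤ i) :
    Function.Bijective (rot hi j : (Fin i → Fin 4) → (Fin i → Fin 4)) := by
  have hinj : Function.Injective (rot hi j : (Fin i → Fin 4) → (Fin i → Fin 4)) := by
    intro c c' h
    have h2 : rot hi (i - j) (rot hi j c) = rot hi (i - j) (rot hi j c') := by rw [h]
    rwa [rot_rot, rot_rot, Nat.add_sub_cancel' hj, rot_i, rot_i] at h2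
  exact Finite.injective_iff_bijective.1 hinj

lemma wgt_rot {i : ℕ} (hi : 0 < i) (j : ℕ) (p : Fin 4 → ℝ) (c : Fin i → Fin 4) :
    ∏ t, p (rot hi j c t) = ∏ t, p (c t) := by
  have hσinj : Function.Injective
      (fun t : Fin i => (⟨((t : ℕ) + j) % i, Nat.mod_lt _ hi⟩ : Fin i)) := by
    intro t t' h
    have h2 : ((t : ℕ) + j) % i = ((t' : ℕ) + j) % i := congrArg Fin.val h
    have h3 : (t : ℕ) ≡ (t' : ℕ) [MOD i] := (Nat.ModEq.add_right_cancel' j h2)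
    have h4 : (t : ℕ) % i = (t' : ℕ) % i := h3
    rw [Nat.mod_eq_of_lt t.isLt, Nat.mod_eq_of_lt t'.isLt] at h4
    exact Fin.ext h4
  have hσ := Finite.injective_iff_bijective.1 hσinj
  exact Fintype.prod_bijective _ hσ _ _ (fun t => rfl)

lemma TT_rot_i {i : ℕ} (hi : 0 < i) (j : ℕ) (c : Fin i → Fin 4) :
    TT hi (rot hi j c) i = TT hi c i := by
  rw [TT_rot, TT_window]
  ring

lemma count_identity (i k : ℕ) (hi : 0 < i) (hk : 1 ≤ k) (hki : k ≤ i) (p : Fin 4 → ℝ) :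
    (k : ℝ) * (∑ c : Fin i → Fin 4, if TT hi c i = -(k : ℤ) then ∏ t, p (c t) else 0)
      = (i : ℝ) * (∑ c : Fin i → Fin 4,
          if TT hi c i = -(k : ℤ) ∧ Good hi k c then ∏ t, p (c t) else 0) := by
  classical
  have step1 : ∀ c : Fin i → Fin 4, TT hi c i = -(k : ℤ) →
      ((Finset.range i).filter (fun j => Good hi k (rot hi j c))).card = k := by
    intro c hc
    have hcc := cycle_core i k hk hki (TT hi c) (TT_zero hi c) (TT_step hi c)
      (fun t => by rw [TT_window hi c t, hc]; ring)
    conv_rhs => rw [← hcc]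
    congr 1
    apply Finset.filter_congr
    intro j hj
    constructor
    · intro hg t ht hti
      have h2 := hg t ht hti
      rw [TT_rot] at h2
      omega
    · intro hg t ht hti
      have h2 := hg t ht hti
      rw [TT_rot]
      omega
  have hL : ∀ c : Fin i → Fin 4,
      (∑ j ∈ Finset.range i,
          if TT hi c i = -(k : ℤ) ∧ Good hi k (rot hi j c) then ∏ t, p (c t) else 0)
        = (k : ℝ) * (if TT hi c i = -(k : ℤ) then ∏ t, p (c t) else 0) := by
    intro c
    by_cases hc : TT hi c i = -(k : ℤ)
    · have h1 : ∀ j, (if TT hi c i = -(k : ℤ) ∧ Good hi k (rot hi j c) then ∏ t, p (c t) else 0)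
          = if Good hi k (rot hi j c) then ∏ t, p (c t) else 0 := fun j => by
        refine if_congr ?_ rfl rfl; simp [hc]
      rw [Finset.sum_congr rfl (fun j _ => h1 j), ← Finset.sum_filter, Finset.sum_const,
        step1 c hc, if_pos hc]
      simp [nsmul_eq_mul]
    · simp [hc]
  have hR : ∀ j, j ≤ i →
      (∑ c : Fin i → Fin 4,
          if TT hi c i = -(k : ℤ) ∧ Good hi k (rot hi j c) then ∏ t, p (c t) else 0)
        = ∑ c : Fin i → Fin 4,
            if TT hi c i = -(k : ℤ) ∧ Good hi k c then ∏ t, p (c t) else 0 := by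
    intro j hj
    refine Fintype.sum_bijective (rot hi j) (rot_bijective hi j hj) _ _ ?_
    intro c
    rw [TT_rot_i hi j c, wgt_rot hi j p c]
  calc (k : ℝ) * (∑ c : Fin i → Fin 4, if TT hi c i = -(k : ℤ) then ∏ t, p (c t) else 0)
      = ∑ c : Fin i → Fin 4,
          (k : ℝ) * (if TT hi c i = -(k : ℤ) then ∏ t, p (c t) else 0) := by
        rw [Finset.mul_sum]
    _ = ∑ c : Fin i → Fin 4, ∑ j ∈ Finset.range i,
          (if TT hi c i = -(k : ℤ) ∧ Good hi k (rot hi j c) then ∏ t, p (c t) else 0) := by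
        exact Finset.sum_congr rfl fun c _ => (hL c).symm
    _ = ∑ j ∈ Finset.range i, ∑ c : Fin i → Fin 4,
          (if TT hi c i = -(k : ℤ) ∧ Good hi k (rot hi j c) then ∏ t, p (c t) else 0) :=
        Finset.sum_comm
    _ = ∑ j ∈ Finset.range i, ∑ c : Fin i → Fin 4,
          (if TT hi c i = -(k : ℤ) ∧ Good hi k c then ∏ t, p (c t) else 0) :=
        Finset.sum_congr rfl fun j hj => hR j (le_of_lt (Finset.mem_range.1 hj))
    _ = (i : ℝ) * (∑ c : Fin i → Fin 4,
          if TT hi c i = -(k : ℤ) ∧ Good hi k c then ∏ t, p (c t) else 0) := by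
        rw [Finset.sum_const, Finset.card_range, nsmul_eq_mul]


lemma coeff_pow_eq (p : Fin 4 → ℝ) (i : ℕ) : ∀ n : ℕ,
    ((∑ j : Fin 4, Polynomial.C (p j) * Polynomial.X ^ (j : ℕ)) ^ i).coeff n
      = ∑ c : Fin i → Fin 4, if (∑ t, ((c t : ℕ))) = n then ∏ t, p (c t) else 0 := by
  induction i with
  | zero =>
    intro n
    rw [Fintype.sum_eq_single (fun t => t.elim0)
      (by intro c hc; exact absurd (funext fun t => t.elim0) hc)]
    simp [Polynomial.coeff_one, eq_comm]
  | succ i ih =>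
    intro n
    set F := ∑ j : Fin 4, Polynomial.C (p j) * Polynomial.X ^ (j : ℕ) with hFdef
    have hL : (F ^ (i + 1)).coeff n
        = ∑ j : Fin 4, p j * (if (j : ℕ) ≤ n then (F ^ i).coeff (n - (j : ℕ)) else 0) := by
      have h2 : F ^ (i + 1) = ∑ j : Fin 4, Polynomial.C (p j) * ((F ^ i) * Polynomial.X ^ (j : ℕ)) := by
        rw [pow_succ, hFdef, Finset.mul_sum]
        exact Finset.sum_congr rfl fun j _ => by ring
      rw [h2, Polynomial.finset_sum_coeff]
      refine Finset.sum_congr rfl fun j _ => ?_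
      rw [Polynomial.coeff_C_mul, Polynomial.coeff_mul_X_pow']
    rw [hL]
    rw [← (Fin.consEquiv (fun _ : Fin (i+1) => Fin 4)).sum_comp
      (fun c : Fin (i+1) → Fin 4 => if (∑ t, ((c t : ℕ))) = n then ∏ t, p (c t) else 0)]
    rw [Fintype.sum_prod_type]
    refine Finset.sum_congr rfl fun j _ => ?_
    have hcons : ∀ c : Fin i → Fin 4,
        (Fin.consEquiv (fun _ : Fin (i+1) => Fin 4)) (j, c) = Fin.cons j c := fun _ => rfl
    simp only [hcons, Fin.sum_univ_succ, Fin.prod_univ_succ, Fin.cons_zero, Fin.cons_succ]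
    by_cases h : (j : ℕ) ≤ n
    · rw [if_pos h, ih (n - (j : ℕ)), Finset.mul_sum]
      refine Finset.sum_congr rfl fun c _ => ?_
      by_cases h2 : (∑ t, ((c t : ℕ))) = n - (j : ℕ)
      · rw [if_pos h2, if_pos (by omega)]
      · rw [if_neg h2, if_neg (by omega), mul_zero]
    · rw [if_neg h, mul_zero]
      refine (Finset.sum_eq_zero fun c _ => ?_).symm
      rw [if_neg (by omega)]



lemma TT_top {i : ℕ} (hi : 0 < i) (c : Fin i → Fin 4) :
    TT hi c i = (∑ t : Fin i, ((c t : ℕ) : ℤ)) - i := by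
  unfold TT
  rw [← Fin.sum_univ_eq_sum_range (fun s => ((cext hi c s : ℤ) - 1)) i]
  have h1 : ∀ t : Fin i, ((cext hi c (t : ℕ) : ℤ) - 1) = ((c t : ℕ) : ℤ) - 1 := fun t => by
    rw [cext_lt hi c _ t.isLt, Fin.eta]
  rw [Finset.sum_congr rfl (fun t _ => h1 t), Finset.sum_sub_distrib]
  simp [Finset.card_univ]

/-- `hitTime = i` iff the walk is `0` at time `i` and nonzero before. -/
lemma hitTime_eq_of (k : ℤ) (step : ℕ → Ω → ℤ) (ω : Ω) (i : ℕ)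
    (h0 : walk k step i ω = 0) (hne : ∀ t < i, walk k step t ω ≠ 0) :
    hitTime k step ω = (i : ℕ∞) := by
  apply le_antisymm
  · exact iInf₂_le i h0
  · refine le_iInf fun t => le_iInf fun ht => ?_
    by_cases h : t < i
    · exact absurd ht (hne t h)
    · exact_mod_cast Nat.le_of_not_lt h

lemma hitTime_eq_iff (k : ℤ) (step : ℕ → Ω → ℤ) (ω : Ω) (i : ℕ) :
    hitTime k step ω = (i : ℕ∞) ↔
      (walk k step i ω = 0 ∧ ∀ t < i, walk k step t ω ≠ 0) := by
  constructor
  · intro h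
    have hex : ∃ t, walk k step t ω = 0 := by
      by_contra hne
      push_neg at hne
      have htop : hitTime k step ω = ⊤ := by
        unfold hitTime
        simp [hne]
      rw [htop] at h
      exact absurd h.symm (by simp)
    have h1 : hitTime k step ω = ((Nat.find hex : ℕ) : ℕ∞) :=
      hitTime_eq_of _ _ _ _ (Nat.find_spec hex) (fun t ht => Nat.find_min hex ht)
    rw [h1] at h
    have h2 : Nat.find hex = i := by exact_mod_cast h
    exact h2 ▸ ⟨Nat.find_spec hex, fun t ht => Nat.find_min hex ht⟩
  · rintro ⟨h0, hne⟩
    exact hitTime_eq_of _ _ _ _ h0 hne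

lemma pos_of_ne (k : ℤ) (hk : 0 < k) (T : ℕ → ℤ) (h0 : T 0 = 0)
    (hstep : ∀ s, T s - 1 ≤ T (s + 1)) :
    ∀ t, (∀ s, s ≤ t → k + T s ≠ 0) → 0 < k + T t := by
  intro t
  induction t with
  | zero => intro _; omega
  | succ n ih =>
    intro h
    have h1 := ih (fun s hs => h s (by omega))
    have h2 := hstep n
    have h3 := h (n + 1) le_rfl
    omega

lemma measure_hitTime [MeasurableSpace Ω] (μ : Measure Ω) [IsProbabilityMeasure μ]
    (step : ℕ → Ω → ℤ) (hmeas : ∀ n, Measurable (step n))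
    (hindep : iIndepFun step μ)
    (p : Fin 4 → ℝ) (hp : ∀ j, 0 ≤ p j) (hpsum : ∑ j : Fin 4, p j = 1)
    (hd : ∀ n (j : Fin 4), μ {ω | step n ω = (j : ℤ) - 1} = ENNReal.ofReal (p j))
    (k : ℕ) (hk : 1 ≤ k) (i : ℕ) (hi : 0 < i) :
    μ {ω | hitTime (k : ℤ) step ω = (i : ℕ∞)}
      = ENNReal.ofReal (∑ c : Fin i → Fin 4,
          if TT hi c i = -(k : ℤ) ∧ Good hi k c then ∏ t, p (c t) else 0) := by
  classical
  set Cyl : (Fin i → Fin 4) → Set Ω :=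
    fun c => ⋂ t ∈ Finset.range i, {ω | step t ω = (cext hi c t : ℤ) - 1} with hCyl
  set V : Finset (Fin i → Fin 4) :=
    Finset.univ.filter (fun c => TT hi c i = -(k : ℤ) ∧ Good hi k c) with hV
  -- measurability of cylinders
  have hCylMeas : ∀ c, MeasurableSet (Cyl c) := by
    intro c
    refine Finset.measurableSet_biInter _ fun t _ => ?_
    exact (hmeas t) (measurableSet_singleton _)
  -- measure of cylinders
  have hCylMeasure : ∀ c, μ (Cyl c) = ENNReal.ofReal (∏ t, p (c t)) := by
    intro c
    have h1 : μ (Cyl c) = ∏ t ∈ Finset.range i, μ {ω | step t ω = (cext hi c t : ℤ) - 1} := by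
      refine hindep.meas_biInter fun t _ => ?_
      exact ⟨{(cext hi c t : ℤ) - 1}, measurableSet_singleton _, rfl⟩
    rw [h1]
    have h2 : ∀ t ∈ Finset.range i,
        μ {ω | step t ω = (cext hi c t : ℤ) - 1} = ENNReal.ofReal (p (cext hi c t)) :=
      fun t _ => hd t _
    rw [Finset.prod_congr rfl h2, ← ENNReal.ofReal_prod_of_nonneg (fun t _ => hp _)]
    congr 1
    rw [← Fin.prod_univ_eq_prod_range (fun t => p (cext hi c t)) i]
    exact Finset.prod_congr rfl fun t _ => by rw [cext_lt hi c t t.isLt, Fin.eta]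
  -- walk values on cylinders
  have hwalk : ∀ c ω, ω ∈ Cyl c → ∀ t, t ≤ i → walk (k : ℤ) step t ω = k + TT hi c t := by
    intro c ω hω t hti
    simp only [hCyl, Set.mem_iInter, Finset.mem_range, Set.mem_setOf_eq] at hω
    unfold walk TT
    congr 1
    exact Finset.sum_congr rfl fun s hs => hω s (by
      have := Finset.mem_range.1 hs; omega)
  -- the null set
  set B : ℕ → Set Ω := fun t => {ω | ∃ j : Fin 4, step t ω = (j : ℤ) - 1} with hB
  have hBmeas : ∀ t, MeasurableSet (B t) := by
    intro t
    have : B t = ⋃ j : Fin 4, {ω | step t ω = (j : ℤ) - 1} := by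
      ext ω; simp [hB]
    rw [this]
    exact MeasurableSet.iUnion fun j => (hmeas t) (measurableSet_singleton _)
  have hBfull : ∀ t, μ (B t) = 1 := by
    intro t
    have h1 : B t = ⋃ j : Fin 4, {ω | step t ω = (j : ℤ) - 1} := by
      ext ω; simp [hB]
    have h2 : Pairwise (Function.onFun Disjoint fun j : Fin 4 => {ω | step t ω = (j : ℤ) - 1}) := by
      intro j j' hjj'
      refine Set.disjoint_left.2 fun ω h1' h2' => ?_
      simp only [Set.mem_setOf_eq] at h1' h2'
      apply hjj'
      have h4 : (j : ℤ) = (j' : ℤ) := by omega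
      have h5 : (j : ℕ) = (j' : ℕ) := by exact_mod_cast h4
      exact Fin.ext h5
    rw [h1, measure_iUnion h2 (fun j => (hmeas t) (measurableSet_singleton _))]
    have h3 : ∀ j : Fin 4, μ {ω | step t ω = (j : ℤ) - 1} = ENNReal.ofReal (p j) :=
      fun j => hd t j
    rw [tsum_fintype]
    calc ∑ j : Fin 4, μ {ω | step t ω = (j : ℤ) - 1}
        = ∑ j : Fin 4, ENNReal.ofReal (p j) := Finset.sum_congr rfl fun j _ => h3 j
      _ = ENNReal.ofReal (∑ j : Fin 4, p j) := (ENNReal.ofReal_sum_of_nonneg fun j _ => hp j).symm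
      _ = 1 := by rw [hpsum, ENNReal.ofReal_one]
  set N : Set Ω := ⋃ t ∈ Finset.range i, (B t)ᶜ with hN
  have hNnull : μ N = 0 := by
    rw [hN]
    refine (measure_biUnion_null_iff (Finset.range i).countable_toSet).2 fun t _ => ?_
    rw [measure_compl (hBmeas t) (measure_ne_top μ _), hBfull t, measure_univ, tsub_self]
  -- set equality
  have hset : {ω | hitTime (k : ℤ) step ω = (i : ℕ∞)} \ N = ⋃ c ∈ V, Cyl c := by
    ext ω
    simp only [Set.mem_diff, Set.mem_setOf_eq, hitTime_eq_iff, Set.mem_iUnion]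
    constructor
    · rintro ⟨⟨hw0, hwne⟩, hωN⟩
      have hB' : ∀ t : Fin i, ∃ j : Fin 4, step (t : ℕ) ω = (j : ℤ) - 1 := by
        intro t
        by_contra hcon
        apply hωN
        rw [hN]
        simp only [Set.mem_iUnion]
        exact ⟨t, ⟨Finset.mem_range.2 t.isLt, fun h => hcon h⟩⟩
      choose f hf using hB'
      have hcyl : ω ∈ Cyl f := by
        simp only [hCyl, Set.mem_iInter, Finset.mem_range, Set.mem_setOf_eq]
        intro t ht
        rw [cext_lt hi f t ht]
        exact hf ⟨t, ht⟩
      have hW := hwalk f ω hcyl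
      have hsum : TT hi f i = -(k : ℤ) := by
        have := hW i le_rfl
        rw [hw0] at this
        omega
      have hgood : Good hi k f := by
        intro t ht hti
        have hpos : 0 < (k : ℤ) + TT hi f t := by
          refine pos_of_ne (k : ℤ) (by exact_mod_cast hk) (TT hi f) (TT_zero hi f)
            (TT_step hi f) t fun s hs => ?_
          have hsi : s < i := by omega
          have := hW s (le_of_lt hsi)
          rw [← this]
          exact hwne s hsi
        omega
      refine ⟨f, ?_, hcyl⟩
      simp only [hV, Finset.mem_coe, Finset.mem_filter, Finset.mem_univ, true_and]
      exact ⟨hsum, hgood⟩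
    · rintro ⟨c, hcV, hcyl⟩
      simp only [hV, Finset.mem_coe, Finset.mem_filter, Finset.mem_univ, true_and] at hcV
      obtain ⟨hsum, hgood⟩ := hcV
      have hW := hwalk c ω hcyl
      refine ⟨⟨?_, ?_⟩, ?_⟩
      · rw [hW i le_rfl, hsum]; ring
      · intro t hti
        rw [hW t (le_of_lt hti)]
        rcases Nat.eq_zero_or_pos t with h | h
        · subst h; rw [TT_zero]; simp; omega
        · have := hgood t h hti; omega
      · rw [hN]
        simp only [Set.mem_iUnion, not_exists]
        intro t
        simp only [Finset.mem_range]
        intro ht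
        simp only [Set.mem_compl_iff, hB, Set.mem_setOf_eq, not_not, not_forall, not_exists]
        simp only [hCyl, Set.mem_iInter, Finset.mem_range, Set.mem_setOf_eq] at hcyl
        exact ⟨cext hi c t, hcyl t ht⟩
    -- end hset
  have hdisj : (V : Set (Fin i → Fin 4)).PairwiseDisjoint Cyl := by
    intro c hc d hd' hcd
    refine Set.disjoint_left.2 fun ω h1 h2 => ?_
    apply hcd
    funext t
    simp only [hCyl, Set.mem_iInter, Finset.mem_range, Set.mem_setOf_eq] at h1 h2
    have e1 := h1 (t : ℕ) t.isLt
    have e2 := h2 (t : ℕ) t.isLt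
    rw [cext_lt hi c _ t.isLt, Fin.eta] at e1
    rw [cext_lt hi d _ t.isLt, Fin.eta] at e2
    have : ((c t : ℕ) : ℤ) = ((d t : ℕ) : ℤ) := by omega
    exact Fin.ext (by exact_mod_cast this)
  calc μ {ω | hitTime (k : ℤ) step ω = (i : ℕ∞)}
      = μ ({ω | hitTime (k : ℤ) step ω = (i : ℕ∞)} \ N) := (measure_diff_null hNnull).symm
    _ = μ (⋃ c ∈ V, Cyl c) := by rw [hset]
    _ = ∑ c ∈ V, μ (Cyl c) := measure_biUnion_finset hdisj fun c _ => hCylMeas c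
    _ = ∑ c ∈ V, ENNReal.ofReal (∏ t, p (c t)) := Finset.sum_congr rfl fun c _ => hCylMeasure c
    _ = ENNReal.ofReal (∑ c ∈ V, ∏ t, p (c t)) :=
        (ENNReal.ofReal_sum_of_nonneg fun c _ => Finset.prod_nonneg fun t _ => hp _).symm
    _ = ENNReal.ofReal (∑ c : Fin i → Fin 4,
          if TT hi c i = -(k : ℤ) ∧ Good hi k c then ∏ t, p (c t) else 0) := by
        rw [hV, Finset.sum_filter]


end HitAux

/-- `P(τ_k = i) = (k/i)·[u^{i-k}] F(u)^i` for `i ≥ k`, where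
`F(u) = p₋₁ + p₀ u + p₁ u² + p₂ u³`, and `P(τ_k = i) = 0` for `i < k`. -/
theorem hitTime_prob_eq_lagrange_coeff
    [MeasurableSpace Ω] (μ : Measure Ω) [IsProbabilityMeasure μ]
    (step : ℕ → Ω → ℤ) (hmeas : ∀ n, Measurable (step n))
    (hindep : iIndepFun step μ)
    (pm1 p0 p1 p2 : ℝ)
    (hpm1 : 0 < pm1) (hp0 : 0 ≤ p0) (hp1 : 0 ≤ p1) (hp2 : 0 ≤ p2)
    (hsum : pm1 + p0 + p1 + p2 = 1)
    (hdm1 : ∀ n, μ {ω | step n ω = -1} = ENNReal.ofReal pm1)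
    (hd0 : ∀ n, μ {ω | step n ω = 0} = ENNReal.ofReal p0)
    (hd1 : ∀ n, μ {ω | step n ω = 1} = ENNReal.ofReal p1)
    (hd2 : ∀ n, μ {ω | step n ω = 2} = ENNReal.ofReal p2)
    (k : ℕ) (hk : 1 ≤ k)
    (F : Polynomial ℝ)
    (hF : F = Polynomial.C pm1 + Polynomial.C p0 * Polynomial.X
        + Polynomial.C p1 * Polynomial.X ^ 2 + Polynomial.C p2 * Polynomial.X ^ 3) :
    ∀ i : ℕ,
      (k ≤ i →
        (μ {ω | hitTime (k : ℤ) step ω = (i : ℕ∞)}).toReal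
          = ((k : ℝ) / (i : ℝ)) * (F ^ i).coeff (i - k))
      ∧ (i < k → μ {ω | hitTime (k : ℤ) step ω = (i : ℕ∞)} = 0) := by
  classical
  intro i
  set p : Fin 4 → ℝ := ![pm1, p0, p1, p2] with hp_def
  have hpj0 : p 0 = pm1 := rfl
  have hpj1 : p 1 = p0 := rfl
  have hpj2 : p 2 = p1 := rfl
  have hpj3 : p 3 = p2 := rfl
  have hp : ∀ j, 0 ≤ p j := by
    intro j
    fin_cases j
    · exact le_of_lt hpm1
    · exact hp0
    · exact hp1
    · exact hp2
  have hpsum : ∑ j : Fin 4, p j = 1 := by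
    rw [Fin.sum_univ_four, hpj0, hpj1, hpj2, hpj3, hsum]
  have hd : ∀ n (j : Fin 4), μ {ω | step n ω = (j : ℤ) - 1} = ENNReal.ofReal (p j) := by
    intro n j
    fin_cases j
    · convert hdm1 n using 2 <;> rfl
    · convert hd0 n using 2 <;> rfl
    · convert hd1 n using 2 <;> rfl
    · convert hd2 n using 2 <;> rfl
  constructor
  · intro hki
    have hi : 0 < i := by omega
    rw [HitAux.measure_hitTime μ step hmeas hindep p hp hpsum hd k hk i hi]
    rw [ENNReal.toReal_ofReal (Finset.sum_nonneg fun c _ => by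
      split
      · exact Finset.prod_nonneg fun t _ => hp _
      · exact le_refl 0)]
    have hF' : F = ∑ j : Fin 4, Polynomial.C (p j) * Polynomial.X ^ (j : ℕ) := by
      rw [hF, Fin.sum_univ_four, hpj0, hpj1, hpj2, hpj3]
      have e0 : ((0 : Fin 4) : ℕ) = 0 := rfl
      have e1 : ((1 : Fin 4) : ℕ) = 1 := rfl
      have e2 : ((2 : Fin 4) : ℕ) = 2 := rfl
      have e3 : ((3 : Fin 4) : ℕ) = 3 := rfl
      rw [e0, e1, e2, e3]
      ring
    rw [hF', HitAux.coeff_pow_eq p i (i - k)]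
    have hTT : ∀ c : Fin i → Fin 4,
        (HitAux.TT hi c i = -(k : ℤ)) ↔ ((∑ t, ((c t : ℕ))) = i - k) := by
      intro c
      rw [HitAux.TT_top, ← Nat.cast_sum]
      constructor <;> intro h <;> omega
    have hid := HitAux.count_identity i k hi hk hki p
    set s1 := ∑ c : Fin i → Fin 4,
      if HitAux.TT hi c i = -(k : ℤ) then ∏ t, p (c t) else 0 with hs1
    set s2 := ∑ c : Fin i → Fin 4,
      if HitAux.TT hi c i = -(k : ℤ) ∧ HitAux.Good hi k c then ∏ t, p (c t) else 0 with hs2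
    have hS1eq : (∑ c : Fin i → Fin 4,
        if (∑ t, ((c t : ℕ))) = i - k then ∏ t, p (c t) else 0) = s1 := by
      rw [hs1]
      exact Finset.sum_congr rfl fun c _ => if_congr (hTT c).symm rfl rfl
    rw [hS1eq]
    have hine : (i : ℝ) ≠ 0 := Nat.cast_ne_zero.2 (by omega)
    field_simp
    linarith [hid]
  · intro hik
    rcases Nat.eq_zero_or_pos i with h0 | hi
    · subst h0
      have hempty : {ω | hitTime (k : ℤ) step ω = ((0 : ℕ) : ℕ∞)} = ∅ := by
        ext ω
        simp only [Set.mem_setOf_eq, Set.mem_empty_iff_false, iff_false]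
        rw [HitAux.hitTime_eq_iff]
        rintro ⟨h1, _⟩
        simp only [walk, Finset.range_zero, Finset.sum_empty, add_zero] at h1
        omega
      rw [hempty, measure_empty]
    · rw [HitAux.measure_hitTime μ step hmeas hindep p hp hpsum hd k hk i hi]
      have hz : (∑ c : Fin i → Fin 4,
          if HitAux.TT hi c i = -(k : ℤ) ∧ HitAux.Good hi k c then ∏ t, p (c t) else 0) = 0 := by
        refine Finset.sum_eq_zero fun c _ => ?_
        rw [if_neg]
        rintro ⟨h1, _⟩
        rw [HitAux.TT_top, ← Nat.cast_sum] at h1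
        omega
      rw [hz, ENNReal.ofReal_zero]
end
end
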